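/- Let (z_j)_{j≥0} be a strictly increasing sequence with z_0=0, z_1=1/2, z_j ↗ 1, set λ_j := z_{j+1} − z_j and s_j := (1 − 2^{-j})/λ_j, and assume inf_{j≥1} s_j > 1. Let T:[0,1)→[0,1) be defined by Tx = 2x on [0,1/2) and, for each j ≥ 1, by the decreasing affine bijection from Z_j := [z_j, z_{j+1}) onto [2^{-j}, 1). Let Y_j := [2^{-(j+1)}, 2^{-j}) for j ≥ 0, and let μ ≪ λ be a T-invariant probability measure whose density has a version constant on each Y_j. Then μ(Y_j) = μ(Y_{j+1}) + σ(j) for every j ≥ 0, where σ(j) := 2μ(Y_0) · 2^{-(j+1)} · Σ_{i>j} s_i^{-1}; consequently μ(Y_j) = Σ_{i≥j} σ(i) for every j ≥ 0. -/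

import Mathlib

open MeasureTheory Filter Set Topology
open scoped ENNReal

/-- First hitting time `φ_E` (values in `ℝ≥0∞`; `∞` if the orbit never hits `E`). -/
noncomputable def hitTime {X : Type*} (T : X → X) (E : Set X) (x : X) : ℝ≥0∞ :=
  sInf {t : ℝ≥0∞ | ∃ n : ℕ, 1 ≤ n ∧ T^[n] x ∈ E ∧ t = (n : ℝ≥0∞)}

/-- First hitting time, `ℕ`-valued (junk value `0` if the orbit never hits `E`). -/
noncomputable def hitN {X : Type*} (T : X → X) (E : Set X) (x : X) : ℕ :=
  sInf {n : ℕ | 1 ≤ n ∧ T^[n] x ∈ E}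

/-- First return map `T_Y`. -/
noncomputable def returnMap {X : Type*} (T : X → X) (Y : Set X) (x : X) : X :=
  T^[hitN T Y x] x

/-- Normalized restriction `μ_Y = μ(Y)⁻¹ μ(Y ∩ ·)`. -/
noncomputable def condMeas {X : Type*} [MeasurableSpace X] (μ : Measure X) (Y : Set X) :
    Measure X := (μ Y)⁻¹ • μ.restrict Y

/-- Convergence in distribution, at continuity points of the limit distribution function,
of `[0,∞]`-valued random variables `f k` on `(X, ν)` to a random variable `R` on `(Ω, P)`. -/
def TendstoInDistrib {X Ω : Type*} [MeasurableSpace X] [MeasurableSpace Ω]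
    (ν : Measure X) (f : ℕ → X → ℝ≥0∞) (P : Measure Ω) (R : Ω → ℝ≥0∞) : Prop :=
  ∀ t : ℝ, ContinuousAt (fun s : ℝ => (P {ω | R ω ≤ ENNReal.ofReal s}).toReal) t →
    Tendsto (fun k => (ν {x | f k x ≤ ENNReal.ofReal t}).toReal) atTop
      (𝓝 ((P {ω | R ω ≤ ENNReal.ofReal t}).toReal))

/-- `f k → ∞` in `ν`-measure. -/
def TendstoInfInMeasure {X : Type*} [MeasurableSpace X] (ν : Measure X)
    (f : ℕ → X → ℝ≥0∞) : Prop :=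
  ∀ N : ℕ, 1 ≤ N → Tendsto (fun k => ν {x | f k x ≤ (N : ℝ≥0∞)}) atTop (𝓝 0)

/-- Points of `Y` can only reach `E` via `E'`. -/
def OnlyReachVia {X : Type*} [MeasurableSpace X] (μ : Measure X) (T : X → X)
    (Y E E' : Set X) : Prop :=
  ∀ n : ℕ, ∀ᵐ x ∂μ.restrict Y, T^[n] x ∈ E → ∃ j ≤ n, T^[j] x ∈ E'

/-- The dyadic interval `Y_j = [2^{-(j+1)}, 2^{-j})`. -/
noncomputable def Yset (j : ℕ) : Set ℝ :=
  Set.Ico ((2 : ℝ) ^ (-(j : ℤ) - 1)) ((2 : ℝ) ^ (-(j : ℤ)))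

/-- The slope `s_j = (1 - 2^{-j})/(z_{j+1} - z_j)`. -/
noncomputable def slopeZ (z : ℕ → ℝ) (j : ℕ) : ℝ :=
  (1 - (2 : ℝ) ^ (-(j : ℤ))) / (z (j + 1) - z j)

/-- `σ(j) = 2 μ(Y_0) · 2^{-(j+1)} · Σ_{i>j} s_i^{-1}`. -/
noncomputable def sigmaY (z : ℕ → ℝ) (μ : MeasureTheory.Measure ℝ) (j : ℕ) : ℝ≥0∞ :=
  2 * μ (Yset 0) * ENNReal.ofReal ((2 : ℝ) ^ (-(j : ℤ) - 1)) *
    ∑' i : ℕ, if j < i then ENNReal.ofReal ((slopeZ z i)⁻¹) else 0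

/-! By invariance `μ (Y_j) = μ (T⁻¹ Y_j)`, and the branches `Z_i = [z_i, z_{i+1})` cut `T⁻¹ Y_j`
into pieces. On `Z_0` the doubling branch pulls `Y_j` back to `Y_{j+1}`. Each `Z_i` with `i ≥ 1`
lies in `Y_0`, where `μ` has constant density `2 μ(Y_0)`, and the affine branch of slope `s_i`
maps it onto `(2^{-i}, 1)`; so it pulls `Y_j` back to an interval of length `2^{-(j+1)} / s_i`
when `j < i` and to the empty set otherwise. Since the `Y_j` are disjoint, `μ (Y_n) → 0`, and
summing the recurrence along the tail gives the series formula. -/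

theorem two_zpow_neg_natCast (j : ℕ) : (2 : ℝ) ^ (-(j : ℤ)) = 2⁻¹ ^ j := by
  rw [zpow_neg, zpow_natCast, inv_pow]

theorem two_zpow_neg_natCast_sub_one (j : ℕ) : (2 : ℝ) ^ (-(j : ℤ) - 1) = 2⁻¹ ^ (j + 1) := by
  rw [← two_zpow_neg_natCast]; push_cast; ring_nf

theorem Yset_eq_Ico (j : ℕ) : Yset j = Ico (2⁻¹ ^ (j + 1)) (2⁻¹ ^ j) := by
  rw [Yset, two_zpow_neg_natCast, two_zpow_neg_natCast_sub_one]

theorem measurableSet_Yset (j : ℕ) : MeasurableSet (Yset j) := measurableSet_Ico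

theorem pairwise_disjoint_Yset : Pairwise (Function.onFun Disjoint Yset) := by
  have h := (pow_right_strictAnti₀ (by norm_num : (0 : ℝ) < 2⁻¹) (by norm_num)).antitone
    |>.pairwise_disjoint_on_Ico_succ
  rwa [show Yset = fun j => Ico ((2⁻¹ : ℝ) ^ (j + 1)) (2⁻¹ ^ j) from funext Yset_eq_Ico]

theorem volume_Yset_zero : volume (Yset 0) = 2⁻¹ := by
  rw [Yset_eq_Ico, Real.volume_Ico, ← ENNReal.ofReal_ofNat 2, ← ENNReal.ofReal_inv_of_pos two_pos]
  norm_num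

theorem slopeZ_mul_sub (z : ℕ → ℝ) (hz : StrictMono z) (i : ℕ) :
    slopeZ z i * (z (i + 1) - z i) = 1 - 2⁻¹ ^ i := by
  rw [slopeZ, two_zpow_neg_natCast, div_mul_cancel₀ _ (sub_pos.2 (hz i.lt_succ_self)).ne']

theorem slopeZ_pos (z : ℕ → ℝ) (hz : StrictMono z) {i : ℕ} (hi : 1 ≤ i) : 0 < slopeZ z i := by
  rw [slopeZ, two_zpow_neg_natCast]
  exact div_pos (sub_pos.2 (pow_lt_one₀ (by norm_num) (by norm_num) (by omega)))
    (sub_pos.2 (hz i.lt_succ_self))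

theorem ENNReal.eq_tsum_nat_add_of_eq_add {a b : ℕ → ℝ≥0∞} (hab : ∀ n, a n = a (n + 1) + b n)
    (ha : Tendsto a atTop (𝓝 0)) (n : ℕ) : a n = ∑' k, b (k + n) := by
  have partial_sum : ∀ m, a n = a (m + n) + ∑ k ∈ Finset.range m, b (k + n) := by
    intro m
    induction m with
    | zero => simp
    | succ m ih =>
      rw [ih, hab (m + n), Finset.sum_range_succ, add_assoc, add_comm (b (m + n)),
        Nat.succ_add]
  have lim := (ha.comp (tendsto_add_atTop_nat n)).add (ENNReal.tendsto_nat_tsum fun k => b (k + n))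
  rw [zero_add] at lim
  exact tendsto_nhds_unique (tendsto_const_nhds.congr partial_sum) lim

theorem ENNReal.tsum_nat_add_eq_tsum_ite (b : ℕ → ℝ≥0∞) (n : ℕ) :
    ∑' k, b (k + n) = ∑' i, if n ≤ i then b i else 0 := by
  rw [← ENNReal.summable.sum_add_tsum_nat_add' (f := fun i => if n ≤ i then b i else 0) (k := n),
    Finset.sum_eq_zero fun i hi => if_neg (by simpa using hi), zero_add]
  simp

theorem iUnion_Ico_succ_eq_Ico_of_tendsto {z : ℕ → ℝ} {b : ℝ} (hz : Monotone z)
    (hzb : ∀ i, z i < b) (hlim : Tendsto z atTop (𝓝 b)) :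
    ⋃ i, Ico (z i) (z (i + 1)) = Ico (z 0) b := by
  refine Subset.antisymm (iUnion_subset fun i => Ico_subset_Ico (hz i.zero_le) (hzb _).le) ?_
  rintro x ⟨hx0, hxb⟩
  have hex : ∃ n, x < z n := (hlim.eventually (eventually_gt_nhds hxb)).exists
  obtain ⟨m, hm⟩ := Nat.exists_eq_add_one_of_ne_zero
    (fun h => (Nat.find_spec hex).not_ge (h ▸ hx0) : Nat.find hex ≠ 0)
  refine mem_iUnion.2 ⟨m, not_lt.1 (Nat.find_min hex (by omega)), hm ▸ Nat.find_spec hex⟩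

theorem measure_eq_tsum_inter_Ico_succ {μ : Measure ℝ} {z : ℕ → ℝ} (hz : Monotone z)
    (hcov : μ (⋃ i, Ico (z i) (z (i + 1)))ᶜ = 0) {A : Set ℝ} (hA : MeasurableSet A) :
    μ A = ∑' i, μ (A ∩ Ico (z i) (z (i + 1))) := by
  rw [← measure_inter_conull hcov, inter_iUnion]
  exact measure_iUnion (hz.pairwise_disjoint_on_Ico_succ.mono fun _ _ h =>
    h.mono inter_subset_right inter_subset_right) fun i => hA.inter measurableSet_Ico

theorem volume_preimage_Ico_inter_Ioo_of_eqOn {f : ℝ → ℝ} {c d s u p q : ℝ} (hs : 0 < s)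
    (hf : EqOn f (fun x => u - s * (x - c)) (Ioo c d)) (hp : u - s * (d - c) ≤ p) (hq : q ≤ u) :
    volume (f ⁻¹' Ico p q ∩ Ioo c d) = ENNReal.ofReal ((q - p) / s) := by
  set a := c + (u - q) / s
  set b := c + (u - p) / s
  have hab : b - a = (q - p) / s := by ring
  have lt_a : ∀ x, a < x ↔ u - q < s * (x - c) := fun x => by
    rw [← div_lt_iff₀' hs]; constructor <;> intro h <;> linarith
  have le_b : ∀ x, x ≤ b ↔ s * (x - c) ≤ u - p := fun x => by
    rw [← le_div_iff₀' hs]; constructor <;> intro h <;> linarith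
  have lt_b : ∀ x, x < b ↔ s * (x - c) < u - p := fun x => by
    rw [← lt_div_iff₀' hs]; constructor <;> intro h <;> linarith
  have inner : Ioo a b ⊆ f ⁻¹' Ico p q ∩ Ioo c d := by
    rintro x ⟨hax, hxb⟩
    rw [lt_a] at hax
    rw [lt_b] at hxb
    have hxcd : x ∈ Ioo c d := ⟨by nlinarith, by nlinarith⟩
    exact ⟨by rw [mem_preimage, hf hxcd]; constructor <;> linarith, hxcd⟩
  have outer : f ⁻¹' Ico p q ∩ Ioo c d ⊆ Ioc a b := by
    rintro x ⟨hx, hxcd⟩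
    rw [mem_preimage, hf hxcd] at hx
    exact ⟨(lt_a x).2 (by linarith [hx.2]), (le_b x).2 (by linarith [hx.1])⟩
  refine le_antisymm ?_ ?_
  · simpa [hab] using measure_mono (μ := volume) outer
  · simpa [hab] using measure_mono (μ := volume) inner

theorem preimage_Ico_inter_Ioo_eq_empty_of_eqOn {f : ℝ → ℝ} {c d s u p q : ℝ} (hs : 0 < s)
    (hf : EqOn f (fun x => u - s * (x - c)) (Ioo c d)) (hq : q ≤ u - s * (d - c)) :
    f ⁻¹' Ico p q ∩ Ioo c d = ∅ := by
  refine eq_empty_of_forall_notMem fun x ⟨hx, hxcd⟩ => ?_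
  rw [mem_preimage, hf hxcd] at hx
  nlinarith [hx.2, hxcd.2]

theorem preimage_Yset_inter_Ico_zero_half {T : ℝ → ℝ}
    (hT0 : ∀ x ∈ Ico (0 : ℝ) (1 / 2), T x = 2 * x) (j : ℕ) :
    T ⁻¹' Yset j ∩ Ico 0 (1 / 2) = Yset (j + 1) := by
  have hpos : (0 : ℝ) < 2⁻¹ ^ j := by positivity
  have hle : (2⁻¹ : ℝ) ^ j ≤ 1 := pow_le_one₀ (by norm_num) (by norm_num)
  ext x
  simp only [Yset_eq_Ico, mem_inter_iff, mem_preimage, mem_Ico, pow_succ _ (j + 1), pow_succ _ j]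
  constructor
  · rintro ⟨hT, hx0, hx1⟩
    rw [hT0 x ⟨hx0, hx1⟩] at hT
    constructor <;> linarith [hT.1, hT.2]
  · rintro ⟨hxl, hxr⟩
    have hx : x ∈ Ico (0 : ℝ) (1 / 2) := ⟨by linarith, by linarith⟩
    rw [hT0 x hx]
    exact ⟨⟨by linarith, by linarith⟩, hx⟩

theorem volume_preimage_Yset_inter_Ioo {z : ℕ → ℝ} (hz : StrictMono z) {T : ℝ → ℝ} {i : ℕ}
    (hi : 1 ≤ i) (hT : EqOn T (fun x => 1 - slopeZ z i * (x - z i)) (Ioo (z i) (z (i + 1))))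
    (j : ℕ) :
    volume (T ⁻¹' Yset j ∩ Ioo (z i) (z (i + 1))) =
      if j < i then ENNReal.ofReal (2⁻¹ ^ (j + 1) / slopeZ z i) else 0 := by
  have hs := slopeZ_pos z hz hi
  have hbot : 1 - slopeZ z i * (z (i + 1) - z i) = 2⁻¹ ^ i := by
    rw [slopeZ_mul_sub z hz]; ring
  rw [Yset_eq_Ico]
  split_ifs with hji
  · rw [volume_preimage_Ico_inter_Ioo_of_eqOn hs hT (hbot ▸ pow_le_pow_of_le_one
      (by norm_num) (by norm_num) hji) (pow_le_one₀ (by norm_num) (by norm_num)), pow_succ]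
    ring_nf
  · rw [preimage_Ico_inter_Ioo_eq_empty_of_eqOn hs hT (hbot ▸ pow_le_pow_of_le_one
      (by norm_num) (by norm_num) (not_lt.1 hji)), measure_empty]

theorem tendsto_measure_Yset_atTop_zero (μ : Measure ℝ) [IsFiniteMeasure μ] :
    Tendsto (fun j => μ (Yset j)) atTop (𝓝 0) :=
  ENNReal.tendsto_atTop_zero_of_tsum_ne_top <| ne_top_of_le_ne_top (measure_ne_top μ _)
    (tsum_meas_le_meas_iUnion_of_disjoint μ measurableSet_Yset pairwise_disjoint_Yset)

theorem measure_Yset_eq_add {z : ℕ → ℝ} (hz : StrictMono z) (hz0 : z 0 = 0) (hz1 : z 1 = 1 / 2)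
    (hzlt : ∀ j, z j < 1) (hzlim : Tendsto z atTop (𝓝 1)) {T : ℝ → ℝ}
    (hT0 : ∀ x ∈ Ico (0 : ℝ) (1 / 2), T x = 2 * x)
    (hTj : ∀ j : ℕ, 1 ≤ j → ∀ x ∈ Ioo (z j) (z (j + 1)), T x = 1 - slopeZ z j * (x - z j))
    {μ : Measure ℝ} (hsupp : μ (Ico (0 : ℝ) 1)ᶜ = 0) (hinv : MeasurePreserving T μ μ)
    {c : ℝ≥0∞} (hY0 : ∀ s ⊆ Yset 0, MeasurableSet s → μ s = c * volume s) (j : ℕ) :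
    μ (Yset j) = μ (Yset (j + 1)) + c * ENNReal.ofReal (2⁻¹ ^ (j + 1)) *
      ∑' i, if j < i then ENNReal.ofReal (slopeZ z i)⁻¹ else 0 := by
  set A := T ⁻¹' Yset j
  have hA : MeasurableSet A := hinv.measurable (measurableSet_Yset j)
  have hcov : μ (⋃ i, Ico (z i) (z (i + 1)))ᶜ = 0 := by
    rwa [iUnion_Ico_succ_eq_Ico_of_tendsto hz.monotone hzlt hzlim, hz0]
  have branch : ∀ i, μ (A ∩ Ico (z (i + 1)) (z (i + 2))) = c * ENNReal.ofReal (2⁻¹ ^ (j + 1)) *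
      if j < i + 1 then ENNReal.ofReal (slopeZ z (i + 1))⁻¹ else 0 := by
    intro i
    have hsub : Ico (z (i + 1)) (z (i + 2)) ⊆ Yset 0 := by
      rw [Yset_eq_Ico, pow_one, pow_zero, inv_eq_one_div, ← hz1]
      exact Ico_subset_Ico (hz.monotone (by omega)) (hzlt _).le
    rw [hY0 _ (inter_subset_right.trans hsub) (hA.inter measurableSet_Ico),
      measure_congr ((ae_eq_refl A).inter Ioo_ae_eq_Ico.symm),
      volume_preimage_Yset_inter_Ioo hz (by omega) (fun x hx => hTj _ (by omega) x hx)]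
    split_ifs
    · rw [div_eq_mul_inv, ENNReal.ofReal_mul (by positivity), mul_assoc]
    · rw [mul_zero, mul_zero]
  calc μ (Yset j) = μ A := (hinv.measure_preimage (measurableSet_Yset j).nullMeasurableSet).symm
    _ = ∑' i, μ (A ∩ Ico (z i) (z (i + 1))) := measure_eq_tsum_inter_Ico_succ hz.monotone hcov hA
    _ = μ (Yset (j + 1)) + ∑' i, μ (A ∩ Ico (z (i + 1)) (z (i + 2))) := by
      rw [tsum_eq_zero_add' ENNReal.summable, hz0, hz1, preimage_Yset_inter_Ico_zero_half hT0]
    _ = _ := by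
      rw [tsum_congr branch, ENNReal.tsum_mul_left,
        tsum_eq_zero_add' ENNReal.summable (f := fun i => if j < i then _ else 0)]
      simp

theorem stmt14_general (z : ℕ → ℝ) (hz : StrictMono z) (hz0 : z 0 = 0) (hz1 : z 1 = 1 / 2)
    (hzlt : ∀ j, z j < 1) (hzlim : Tendsto z atTop (𝓝 1))
    (T : ℝ → ℝ) (hT0 : ∀ x ∈ Set.Ico (0 : ℝ) (1 / 2), T x = 2 * x)
    (hTj : ∀ j : ℕ, 1 ≤ j → ∀ x ∈ Set.Ioo (z j) (z (j + 1)),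
      T x = 1 - slopeZ z j * (x - z j))
    (μ : Measure ℝ) [IsProbabilityMeasure μ]
    (hsupp : μ (Set.Ico (0 : ℝ) 1)ᶜ = 0) (hinv : MeasurePreserving T μ μ)
    (η : ℕ → ℝ≥0∞)
    (hdens : ∀ j : ℕ, ∀ s ⊆ Yset j, MeasurableSet s → μ s = η j * volume s) :
    (∀ j : ℕ, μ (Yset j) = μ (Yset (j + 1)) + sigmaY z μ j) ∧
      (∀ j : ℕ, μ (Yset j) = ∑' i : ℕ, if j ≤ i then sigmaY z μ i else 0) := by
  have hη0 : η 0 = 2 * μ (Yset 0) := by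
    rw [hdens 0 _ subset_rfl (measurableSet_Yset 0), volume_Yset_zero, mul_left_comm,
      ENNReal.mul_inv_cancel two_ne_zero ENNReal.ofNat_ne_top, mul_one]
  have recurrence : ∀ j, μ (Yset j) = μ (Yset (j + 1)) + sigmaY z μ j := fun j => by
    rw [measure_Yset_eq_add hz hz0 hz1 hzlt hzlim hT0 hTj hsupp hinv (hdens 0) j, sigmaY, hη0,
      two_zpow_neg_natCast_sub_one]
  exact ⟨recurrence, fun j => (ENNReal.eq_tsum_nat_add_of_eq_add recurrence
    (tendsto_measure_Yset_atTop_zero μ) j).trans (ENNReal.tsum_nat_add_eq_tsum_ite _ j)⟩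

/-- **The invariant measure of the piecewise affine example.**
For the piecewise affine map `T` built from `(z_j)` and any `T`-invariant probability
`μ ≪ λ` whose density is constant on each `Y_j = [2^{-(j+1)}, 2^{-j})`, one has
`μ(Y_j) = μ(Y_{j+1}) + σ(j)` for all `j`, and consequently `μ(Y_j) = Σ_{i ≥ j} σ(i)`. -/
theorem stmt14 (z : ℕ → ℝ) (hz : StrictMono z) (hz0 : z 0 = 0) (hz1 : z 1 = 1 / 2)
    (hzlt : ∀ j, z j < 1) (hzlim : Tendsto z atTop (𝓝 1))
    (hs : ∃ ρ : ℝ, 1 < ρ ∧ ∀ j : ℕ, 1 ≤ j → ρ ≤ slopeZ z j)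
    (T : ℝ → ℝ) (hT0 : ∀ x ∈ Set.Ico (0 : ℝ) (1 / 2), T x = 2 * x)
    (hTj : ∀ j : ℕ, 1 ≤ j → ∀ x ∈ Set.Ioo (z j) (z (j + 1)),
      T x = 1 - slopeZ z j * (x - z j))
    (hmaps : Set.MapsTo T (Set.Ico (0 : ℝ) 1) (Set.Ico (0 : ℝ) 1))
    (μ : Measure ℝ) [IsProbabilityMeasure μ] (hac : μ ≪ volume)
    (hsupp : μ (Set.Ico (0 : ℝ) 1)ᶜ = 0) (hinv : MeasurePreserving T μ μ)
    (η : ℕ → ℝ≥0∞)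
    (hdens : ∀ j : ℕ, ∀ s ⊆ Yset j, MeasurableSet s → μ s = η j * volume s) :
    (∀ j : ℕ, μ (Yset j) = μ (Yset (j + 1)) + sigmaY z μ j) ∧
      (∀ j : ℕ, μ (Yset j) = ∑' i : ℕ, if j ≤ i then sigmaY z μ i else 0) :=
  stmt14_general z hz hz0 hz1 hzlt hzlim T hT0 hTj μ hsupp hinv η hdens
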